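/- For real numbers p ≥ 0 and q > 0 and every integer n ≥ 0, the combined map from the disjoint union ⨿_{k+l=n} (Δᵏ_p × Δˡ_q) to Δⁿ_{p+q}, induced by the prismatic maps μ^{k,l}_{p,q}, is a continuous surjection, and hence a quotient map (its domain being compact and its codomain Hausdorff). -/

import Mathlib

open Topology

/-- The scaled `n`-simplex `Δⁿ_p ⊆ ℝ^{n+1}`. -/
def SSimplex (n : ℕ) (p : ℝ) : Type :=
  {t : Fin (n + 1) → ℝ // (∀ i, 0 ≤ t i) ∧ ∑ i, t i = p}

instance (n : ℕ) (p : ℝ) : TopologicalSpace (SSimplex n p) :=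
  inferInstanceAs (TopologicalSpace {t : Fin (n + 1) → ℝ // (∀ i, 0 ≤ t i) ∧ ∑ i, t i = p})

/-- The underlying formula of the prismatic map:
`((s₀,…,s_k),(t₀,…,t_l)) ↦ (s₀,…,s_{k−1}, s_k + t₀, t₁,…,t_l)`. -/
def prismFun (k l : ℕ) (s : Fin (k + 1) → ℝ) (t : Fin (l + 1) → ℝ) :
    Fin (k + l + 1) → ℝ :=
  (Fin.append (Fin.init s) (Fin.cons (s (Fin.last k) + t 0) (Fin.tail t)) :
    Fin (k + (l + 1)) → ℝ)

theorem prismFun_mem {k l : ℕ} {p q : ℝ} {s : Fin (k + 1) → ℝ} {t : Fin (l + 1) → ℝ}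
    (hs : (∀ i, 0 ≤ s i) ∧ ∑ i, s i = p) (ht : (∀ i, 0 ≤ t i) ∧ ∑ i, t i = q) :
    (∀ i, 0 ≤ prismFun k l s t i) ∧ ∑ i, prismFun k l s t i = p + q := by
  have key : (∀ i : Fin (k + (l + 1)),
        0 ≤ Fin.append (Fin.init s) (Fin.cons (s (Fin.last k) + t 0) (Fin.tail t)) i) ∧
      ∑ i : Fin (k + (l + 1)),
        Fin.append (Fin.init s) (Fin.cons (s (Fin.last k) + t 0) (Fin.tail t)) i = p + q := by
    constructor
    · intro i
      refine Fin.addCases (fun j => ?_) (fun j => ?_) i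
      · rw [Fin.append_left]
        exact hs.1 _
      · rw [Fin.append_right]
        refine Fin.cases ?_ (fun j => ?_) j
        · simpa using add_nonneg (hs.1 _) (ht.1 _)
        · simpa [Fin.tail] using ht.1 _
    · rw [Fin.sum_univ_add]
      simp only [Fin.append_left, Fin.append_right]
      rw [Fin.sum_cons]
      have h1 : ∑ i : Fin (k + 1), s i = ∑ i : Fin k, Fin.init s i + s (Fin.last k) := by
        rw [Fin.sum_univ_castSucc]
        simp [Fin.init]
      have h2 : ∑ i : Fin (l + 1), t i = t 0 + ∑ i : Fin l, Fin.tail t i := by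
        rw [Fin.sum_univ_succ]
        simp [Fin.tail]
      rw [← hs.2, ← ht.2, h1, h2]
      ring
  exact key

/-- The prismatic map `μ^{k,l}_{p,q} : Δᵏ_p × Δˡ_q → Δ^{k+l}_{p+q}`. -/
def prismMap (k l : ℕ) (p q : ℝ) (x : SSimplex k p × SSimplex l q) :
    SSimplex (k + l) (p + q) :=
  ⟨prismFun k l x.1.1 x.2.1, prismFun_mem x.1.2 x.2.2⟩

/-- Transport a point of `Δᵐ_p` along an equality `m = n` of dimensions. -/
def castSimplex {m n : ℕ} (h : m = n) {p : ℝ} (x : SSimplex m p) : SSimplex n p :=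
  ⟨x.1 ∘ Fin.cast (congrArg (· + 1) h.symm), by
    refine ⟨fun i => x.2.1 _, ?_⟩
    exact (Fintype.sum_equiv (finCongr (congrArg (· + 1) h.symm))
      (x.1 ∘ Fin.cast (congrArg (· + 1) h.symm)) x.1 (fun i => rfl)).trans x.2.2⟩

/-!
A continuous surjection from a compact space onto a Hausdorff space is closed, hence a quotient
map; the domain is a finite disjoint union of products of simplices, so only surjectivity needs
an argument. Given `u ∈ Δⁿ_{p+q}`, the partial sums of `u` run from `0` to `p + q ≥ p`, so some
`k ≤ n` has `u₀ + ⋯ + u_{k-1} ≤ p ≤ u₀ + ⋯ + u_k`. Splitting `u_k` between the two factors,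
`s = (u₀, …, u_{k-1}, p - ∑_{i<k} uᵢ) ∈ Δᵏ_p` and `t = (∑_{i≤k} uᵢ - p, u_{k+1}, …, u_n) ∈ Δ^{n-k}_q`
are sent to `u` by `μ^{k,n-k}_{p,q}`.
-/

open Finset

instance (n : ℕ) (p : ℝ) : T2Space (SSimplex n p) :=
  inferInstanceAs (T2Space {t : Fin (n + 1) → ℝ // (∀ i, 0 ≤ t i) ∧ ∑ i, t i = p})

theorem isCompact_setOf_sum_eq (n : ℕ) (p : ℝ) :
    IsCompact {t : Fin (n + 1) → ℝ | (∀ i, 0 ≤ t i) ∧ ∑ i, t i = p} := by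
  refine (isCompact_Icc (a := 0) (b := fun _ => p)).of_isClosed_subset ?_ ?_
  · simp only [Set.ofPred_and, Set.ofPred_forall]
    exact (isClosed_iInter fun i => isClosed_le continuous_const (continuous_apply i)).inter
      (isClosed_eq (continuous_finsetSum _ fun i _ => continuous_apply i) continuous_const)
  · rintro t ⟨ht, rfl⟩
    exact ⟨ht, fun i => single_le_sum (fun j _ => ht j) (mem_univ i)⟩

instance (n : ℕ) (p : ℝ) : CompactSpace (SSimplex n p) :=
  isCompact_iff_compactSpace.mp (isCompact_setOf_sum_eq n p)

instance (n : ℕ) : Finite {x : ℕ × ℕ // x.1 + x.2 = n} :=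
  .of_equiv _ (Equiv.subtypeEquivRight fun _ => mem_antidiagonal)

theorem SSimplex.continuous_val (n : ℕ) (p : ℝ) :
    Continuous (Subtype.val : SSimplex n p → Fin (n + 1) → ℝ) :=
  continuous_subtype_val

theorem continuous_prismFun (k l : ℕ) :
    Continuous fun x : (Fin (k + 1) → ℝ) × (Fin (l + 1) → ℝ) => prismFun k l x.1 x.2 := by
  refine continuous_pi fun j : Fin (k + (l + 1)) => Fin.addCases (fun i => ?_) (fun i => ?_) j
  · simp only [prismFun, Fin.append_left]
    fun_prop
  · refine Fin.cases ?_ (fun i => ?_) i <;>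
      simp only [prismFun, Fin.append_right, Fin.cons_zero, Fin.cons_succ] <;> fun_prop

theorem continuous_prismMap (k l : ℕ) (p q : ℝ) : Continuous (prismMap k l p q) :=
  ((continuous_prismFun k l).comp
    ((SSimplex.continuous_val k p).prodMap (SSimplex.continuous_val l q))).subtype_mk _

theorem continuous_castSimplex {m n : ℕ} (h : m = n) (p : ℝ) :
    Continuous (castSimplex h (p := p)) := by
  unfold castSimplex
  exact (continuous_pi fun _ => (continuous_apply _).comp (SSimplex.continuous_val m p)).subtype_mk _

theorem prismFun_snoc_cons {k l : ℕ} (a : Fin k → ℝ) (x y : ℝ) (b : Fin l → ℝ) :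
    prismFun k l (Fin.snoc a x) (Fin.cons y b) = Fin.append a (Fin.cons (x + y) b) := by
  simp [prismFun]

theorem exists_apply_le_le_apply_succ {α : Type*} [LinearOrder α] (f : ℕ → α) {a : α} :
    ∀ n, f 0 ≤ a → a ≤ f (n + 1) → ∃ k ≤ n, f k ≤ a ∧ a ≤ f (k + 1)
  | 0, h₀, h₁ => ⟨0, le_rfl, h₀, h₁⟩
  | n + 1, h₀, h₁ => by
    rcases le_total (f (n + 1)) a with h | h
    · exact ⟨n + 1, le_rfl, h, h₁⟩
    · obtain ⟨k, hk, hfk⟩ := exists_apply_le_le_apply_succ f n h₀ h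
      exact ⟨k, hk.trans n.le_succ, hfk⟩

theorem exists_eq_append_cons {α : Type*} {k l : ℕ} (u : Fin (k + (l + 1)) → α) :
    ∃ (a : Fin k → α) (c : α) (b : Fin l → α), u = Fin.append a (Fin.cons c b) :=
  ⟨_, _, _, by rw [Fin.cons_self_tail, Fin.append_castAdd_natAdd]⟩

theorem sum_ite_lt_append {M : Type*} [AddCommMonoid M] {k m : ℕ} (a : Fin k → M)
    (b : Fin m → M) (j : ℕ) :
    ∑ i : Fin (k + m), (if (i : ℕ) < k + j then Fin.append a b i else 0) =
      ∑ i, a i + ∑ i : Fin m, if (i : ℕ) < j then b i else 0 := by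
  have hlt (i : Fin k) : (i : ℕ) < k + j := by omega
  simp [Fin.sum_univ_add, hlt]

theorem exists_prismMap_eq {k l : ℕ} {p q : ℝ} (a : Fin k → ℝ) (c : ℝ) (b : Fin l → ℝ)
    (ha : ∀ i, 0 ≤ a i) (hb : ∀ i, 0 ≤ b i) (hsum : ∑ i, a i + c + ∑ i, b i = p + q)
    (hlo : ∑ i, a i ≤ p) (hhi : p ≤ ∑ i, a i + c) :
    ∃ x : SSimplex k p × SSimplex l q, (prismMap k l p q x).1 = Fin.append a (Fin.cons c b) := by
  refine ⟨(⟨Fin.snoc a (p - ∑ i, a i), ?_, ?_⟩, ⟨Fin.cons (∑ i, a i + c - p) b, ?_, ?_⟩), ?_⟩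
  · exact Fin.lastCases (by simpa using hlo) (by simpa using ha)
  · simp [Fin.sum_snoc]
  · exact Fin.cases (by simpa using hhi) (by simpa using hb)
  · simp [Fin.sum_cons]
    linarith
  · simp [prismMap, prismFun_snoc_cons]

theorem exists_castSimplex_prismMap_eq {p q : ℝ} (hp : 0 ≤ p) (hq : 0 ≤ q) {n : ℕ}
    (u : SSimplex n (p + q)) :
    ∃ (k l : ℕ) (h : k + l = n) (x : SSimplex k p × SSimplex l q),
      castSimplex h (prismMap k l p q x) = u := by
  obtain ⟨u, hu, hsum⟩ := u
  obtain ⟨k, hk, hlo, hhi⟩ := exists_apply_le_le_apply_succ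
    (fun j => ∑ i : Fin (n + 1), if (i : ℕ) < j then u i else 0) n (by simpa using hp)
    (by simpa [Fin.is_le, hsum] using hq)
  obtain ⟨l, rfl⟩ := Nat.exists_eq_add_of_le hk
  obtain ⟨a, c, b, rfl⟩ := exists_eq_append_cons (k := k) (l := l) u
  have hc : ∑ i : Fin (l + 1), (if (i : ℕ) < 1 then Fin.cons c b i else 0) = c := by simp
  replace hlo : ∑ i, a i ≤ p := by
    simpa using (sum_ite_lt_append a (Fin.cons c b) 0).symm.trans_le hlo
  replace hhi : p ≤ ∑ i, a i + c := by
    simpa [hc] using hhi.trans_eq (sum_ite_lt_append a (Fin.cons c b) 1)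
  change ∑ i : Fin (k + (l + 1)), _ = _ at hsum
  replace hsum : ∑ i, a i + c + ∑ i, b i = p + q := by
    simpa [Fin.sum_univ_add, Fin.sum_cons, add_assoc] using hsum
  obtain ⟨x, hx⟩ := exists_prismMap_eq a c b (fun i => by simpa using hu (Fin.castAdd (l + 1) i))
    (fun i => by simpa using hu (Fin.natAdd k i.succ)) hsum hlo hhi
  exact ⟨k, l, rfl, x, Subtype.ext hx⟩

/-- For `p ≥ 0`, `q > 0` and `n ≥ 0`, the combined map
`⨿_{k+l=n} (Δᵏ_p × Δˡ_q) → Δⁿ_{p+q}` induced by the prismatic maps `μ^{k,l}_{p,q}` is a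
continuous surjection, and hence a quotient map. -/
theorem prism_isQuotientMap (p q : ℝ) (hp : 0 ≤ p) (hq : 0 < q) (n : ℕ) :
    Continuous
        (fun x : Σ kl : {x : ℕ × ℕ // x.1 + x.2 = n}, SSimplex kl.1.1 p × SSimplex kl.1.2 q =>
          castSimplex x.1.2 (prismMap x.1.1.1 x.1.1.2 p q x.2)) ∧
      Function.Surjective
        (fun x : Σ kl : {x : ℕ × ℕ // x.1 + x.2 = n}, SSimplex kl.1.1 p × SSimplex kl.1.2 q =>
          castSimplex x.1.2 (prismMap x.1.1.1 x.1.1.2 p q x.2)) ∧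
      IsQuotientMap
        (fun x : Σ kl : {x : ℕ × ℕ // x.1 + x.2 = n}, SSimplex kl.1.1 p × SSimplex kl.1.2 q =>
          castSimplex x.1.2 (prismMap x.1.1.1 x.1.1.2 p q x.2)) := by
  set F := fun x : Σ kl : {x : ℕ × ℕ // x.1 + x.2 = n}, SSimplex kl.1.1 p × SSimplex kl.1.2 q =>
    castSimplex x.1.2 (prismMap x.1.1.1 x.1.1.2 p q x.2)
  have hcont : Continuous F := continuous_sigma fun kl =>
    (continuous_castSimplex kl.2 _).comp (continuous_prismMap _ _ p q)
  have hsurj : F.Surjective := fun u => by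
    obtain ⟨k, l, h, x, hx⟩ := exists_castSimplex_prismMap_eq hp hq.le u
    exact ⟨⟨⟨(k, l), h⟩, x⟩, hx⟩
  exact ⟨hcont, hsurj, hcont.isClosedMap.isQuotientMap hcont hsurj⟩
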